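/- Let G be a finite simple graph with a vertex cover S such that every vertex of V(G)∖S has degree at least 3 in G. If c₁ and c₂ are 2-CNCF-colorings of G with c₁(s) = c₂(s) for all s ∈ S, then c₁ = c₂. In other words, a 2-CNCF-coloring of such a graph is uniquely determined by its restriction to the vertex cover. -/

import Mathlib

/-!
Outside the vertex cover `S`, a vertex `v` has all its neighbours in `S`, so two colorings agreeing
on `S` can differ on `N[v]` only at `v`. With two colors, `c` is CNCF at `v` exactly when some color
occurs once in `N[v]`. If `v` has `r` red and `b` blue neighbours (`r + b ≥ 3`) and is red under
one coloring and blue under the other, this asks for `r = 0 ∨ b = 1` and for `r = 1 ∨ b = 0`,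
which is impossible.
-/

inductive Color where
  | red
  | blue
deriving DecidableEq

/-- A coloring `c` of the vertices of `G` is a closed-neighborhood conflict-free
coloring if every closed neighborhood `N[v] = {v} ∪ N(v)` contains a vertex whose
color is unique in `N[v]`. -/
def IsCNCF {V C : Type*} (G : SimpleGraph V) (c : V → C) : Prop :=
  ∀ v : V, ∃ u ∈ insert v (G.neighborSet v),
    ∀ w ∈ insert v (G.neighborSet v), w ≠ u → c w ≠ c u

open Finset

theorem Color.card_filter_red_add_card_filter_blue {α : Type*} (s : Finset α) (c : α → Color) :
    #{a ∈ s | c a = .red} + #{a ∈ s | c a = .blue} = #s := by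
  convert card_filter_add_card_filter_not (s := s) (fun a => c a = .red) using 3
  exact filter_congr fun a _ => by cases c a <;> decide

theorem Finset.card_filter_insert_of_notMem {α : Type*} [DecidableEq α] (p : α → Prop)
    [DecidablePred p] {a : α} {s : Finset α} (ha : a ∉ s) :
    #{x ∈ insert a s | p x} = #{x ∈ s | p x} + if p a then 1 else 0 := by
  rw [filter_insert]
  split_ifs
  · exact card_insert_of_notMem fun h => ha (mem_filter.mp h).1
  · rfl

theorem Finset.exists_card_filter_eq_one_of_unique {α C : Type*} [DecidableEq C] {s : Finset α}
    {c : α → C} {u : α} (hu : u ∈ s) (huniq : ∀ w ∈ s, w ≠ u → c w ≠ c u) :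
    ∃ k, #{w ∈ s | c w = k} = 1 :=
  ⟨c u, card_eq_one.mpr ⟨u, by
    ext w
    simp only [mem_filter, mem_singleton]
    exact ⟨fun ⟨hw, hcw⟩ => by_contra fun hwu => huniq w hw hwu hcw,
      by rintro rfl; exact ⟨hu, rfl⟩⟩⟩⟩

namespace IsCNCF

variable {V C : Type*} [Fintype V] [DecidableEq V] {G : SimpleGraph V} [DecidableRel G.Adj]

theorem exists_card_filter_eq_one [DecidableEq C] {c : V → C} (hc : IsCNCF G c) (v : V) :
    ∃ k, #{w ∈ insert v (G.neighborFinset v) | c w = k} = 1 := by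
  obtain ⟨u, hu, huniq⟩ := hc v
  have hmem : ∀ w, w ∈ insert v (G.neighborFinset v) ↔ w ∈ insert v (G.neighborSet v) := by
    simp
  exact exists_card_filter_eq_one_of_unique ((hmem u).mpr hu)
    fun w hw => huniq w ((hmem w).mp hw)

theorem apply_eq_of_eqOn_neighborSet {c₁ c₂ : V → Color} (h₁ : IsCNCF G c₁)
    (h₂ : IsCNCF G c₂) {v : V} (hdeg : 3 ≤ G.degree v)
    (hN : Set.EqOn c₁ c₂ (G.neighborSet v)) : c₁ v = c₂ v := by
  have hv : v ∉ G.neighborFinset v := by simp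
  have hsame : ∀ k,
      #{w ∈ G.neighborFinset v | c₁ w = k} = #{w ∈ G.neighborFinset v | c₂ w = k} :=
    fun k => congrArg card <| filter_congr fun w hw => by
      rw [hN ((G.mem_neighborFinset v w).mp hw)]
  have htotal := Color.card_filter_red_add_card_filter_blue (G.neighborFinset v) c₂
  rw [G.card_neighborFinset_eq_degree] at htotal
  obtain ⟨k₁, hk₁⟩ := h₁.exists_card_filter_eq_one v
  obtain ⟨k₂, hk₂⟩ := h₂.exists_card_filter_eq_one v
  rw [card_filter_insert_of_notMem _ hv, hsame] at hk₁
  rw [card_filter_insert_of_notMem _ hv] at hk₂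
  by_contra hne
  cases hc₁ : c₁ v <;> cases hc₂ : c₂ v <;>
    simp only [hc₁, hc₂, not_true_eq_false] at hne <;>
    cases k₁ <;> cases k₂ <;>
    simp only [hc₁, hc₂, reduceCtorEq, ↓reduceIte] at hk₁ hk₂ <;>
    omega

end IsCNCF

/-- If `S` is a vertex cover of `G` and every vertex outside `S` has degree at
least 3, then any two 2-CNCF-colorings of `G` agreeing on `S` are equal. -/
theorem two_CNCF_determined_by_vc {V : Type*} [Fintype V] [DecidableEq V]
    (G : SimpleGraph V) [DecidableRel G.Adj]
    (S : Set V) (hvc : ∀ ⦃a b : V⦄, G.Adj a b → a ∈ S ∨ b ∈ S)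
    (hdeg : ∀ v : V, v ∉ S → 3 ≤ G.degree v)
    (c₁ c₂ : V → Color) (h₁ : IsCNCF G c₁) (h₂ : IsCNCF G c₂)
    (hagree : ∀ s ∈ S, c₁ s = c₂ s) :
    c₁ = c₂ := by
  funext v
  by_cases hv : v ∈ S
  · exact hagree v hv
  · exact h₁.apply_eq_of_eqOn_neighborSet h₂ (hdeg v hv)
      fun w hw => hagree w ((hvc hw).resolve_left hv)
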